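/- Let s : Fin K → ℕ with K ≥ 2, and suppose s' is obtained from s by incrementing exactly one coordinate k₀ by 1. If s_{k₀} is a strict maximum of s (s_{k₀} > s_j for all j ≠ k₀), then the population variance strictly increases: F(s') > F(s). -/

import Mathlib

/-!
Writing `F` as the mean of squares minus the square of the mean, raising coordinate `k` by `d`
changes `F` by `(d / n) * (2 (t k - mean t) + d (1 - 1/n))`. At a maximal coordinate
`t k ≥ mean t`, and `1 - 1/n > 0` once `n ≥ 2`, so the change is positive.
-/

open Finset

section PopulationVariance

variable {ι : Type*} [Fintype ι]

noncomputable def popMean (t : ι → ℝ) : ℝ :=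
  (1 / (Fintype.card ι : ℝ)) * ∑ i, t i

noncomputable def popVariance (t : ι → ℝ) : ℝ :=
  (1 / (Fintype.card ι : ℝ)) * ∑ i, (t i - popMean t) ^ 2

theorem popMean_le_of_forall_le [Nonempty ι] {t : ι → ℝ} {k : ι} (hk : ∀ j, t j ≤ t k) :
    popMean t ≤ t k := by
  have hn : (0 : ℝ) < Fintype.card ι := by exact_mod_cast Fintype.card_pos
  have hsum : ∑ i, t i ≤ Fintype.card ι * t k := by
    simpa using sum_le_card_nsmul univ t (t k) fun j _ => hk j
  rw [popMean, one_div_mul_eq_div, div_le_iff₀ hn]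
  linarith

theorem popVariance_eq_popMean_sq_sub_sq_popMean [Nonempty ι] (t : ι → ℝ) :
    popVariance t = popMean (t ^ 2) - popMean t ^ 2 := by
  have hn : (Fintype.card ι : ℝ) ≠ 0 := by exact_mod_cast Fintype.card_ne_zero
  simp only [popVariance, popMean, sub_sq, sum_add_distrib, sum_sub_distrib, sum_const,
    card_univ, nsmul_eq_mul, ← sum_mul, ← mul_sum, Pi.pow_apply]
  field_simp
  ring

theorem popVariance_add_single_sub_popVariance [Nonempty ι] [DecidableEq ι]
    (t : ι → ℝ) (k : ι) (d : ℝ) :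
    popVariance (t + Pi.single k d) - popVariance t =
      d / Fintype.card ι * (2 * (t k - popMean t) + d * (1 - 1 / Fintype.card ι)) := by
  have hn : (Fintype.card ι : ℝ) ≠ 0 := by exact_mod_cast Fintype.card_ne_zero
  have hsum : ∑ i, (t + Pi.single k d : ι → ℝ) i = ∑ i, t i + d := by
    simp [sum_add_distrib]
  have hsq : ∑ i, ((t + Pi.single k d) ^ 2 : ι → ℝ) i =
      ∑ i, (t ^ 2) i + (2 * t k * d + d ^ 2) := by
    have hpt : ∀ i, ((t + Pi.single k d) ^ 2 : ι → ℝ) i =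
        (t ^ 2) i + (Pi.single k (2 * t k * d + d ^ 2) : ι → ℝ) i := by
      intro i
      rcases eq_or_ne i k with rfl | hi
      · simp only [Pi.pow_apply, Pi.add_apply, Pi.single_eq_same]; ring
      · simp [hi]
    simp [hpt, sum_add_distrib]
  simp only [popVariance_eq_popMean_sq_sub_sq_popMean, popMean, hsum, hsq]
  field_simp
  ring

theorem popVariance_lt_add_single_of_forall_le [DecidableEq ι] (hcard : 2 ≤ Fintype.card ι)
    {t : ι → ℝ} {k : ι} (hk : ∀ j, t j ≤ t k) {d : ℝ} (hd : 0 < d) :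
    popVariance t < popVariance (t + Pi.single k d) := by
  have : Nonempty ι := Fintype.card_pos_iff.mp (by omega)
  have hn : (2 : ℝ) ≤ Fintype.card ι := by exact_mod_cast hcard
  have hmean := popMean_le_of_forall_le hk
  have hfrac : 1 / (Fintype.card ι : ℝ) < 1 := by
    rw [div_lt_one (by linarith)]; linarith
  have hincr := popVariance_add_single_sub_popVariance t k d
  have hgain : 0 < d * (1 - 1 / Fintype.card ι) := mul_pos hd (sub_pos.mpr hfrac)
  have : 0 < d / Fintype.card ι * (2 * (t k - popMean t) + d * (1 - 1 / Fintype.card ι)) :=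
    mul_pos (by positivity) (by linarith)
  linarith

end PopulationVariance

theorem fairness_cost_strict_increase (K : ℕ) (hK : 2 ≤ K) (s : Fin K → ℕ)
    (k₀ : Fin K) (hmax : ∀ j, j ≠ k₀ → s j < s k₀)
    (s' : Fin K → ℕ) (hs' : ∀ k, s' k = if k = k₀ then s k + 1 else s k) :
    (1 / (K : ℝ)) * ∑ k, ((s k : ℝ) - (1 / (K : ℝ)) * ∑ j, (s j : ℝ)) ^ 2 <
      (1 / (K : ℝ)) * ∑ k, ((s' k : ℝ) - (1 / (K : ℝ)) * ∑ j, (s' j : ℝ)) ^ 2 := by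
  have hle : ∀ j, (s j : ℝ) ≤ s k₀ := by
    intro j
    rcases eq_or_ne j k₀ with rfl | hj
    · rfl
    · exact_mod_cast (hmax j hj).le
  have hs'_eq : (fun k => (s' k : ℝ)) = (fun k => (s k : ℝ)) + Pi.single k₀ 1 := by
    ext k
    rcases eq_or_ne k k₀ with rfl | hk
    · simp [hs']
    · simp [hs', hk]
  have := popVariance_lt_add_single_of_forall_le (by simpa using hK) hle one_pos
  simpa only [popVariance, popMean, Fintype.card_fin, ← hs'_eq] using this
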